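/- Let a1, a2, a3 be distinct real numbers and let P^(3)(M) be the cubic polynomial vector defined as in the k = 3 modified Euler–Poinsot system. If M(t) solves the Euler equations Ṁ = M × aM, then γ(t) := P^(3)(M(t)) solves the associated Poisson equations γ̇ = 3·γ × aM; that is, d/dt P^(3)(M(t)) = 3·P^(3)(M(t)) × aM(t). -/

import Mathlib

/-- Cross product in `ℝ³`. -/
def cross3 (v w : Fin 3 → ℝ) : Fin 3 → ℝ :=
  ![v 1 * w 2 - v 2 * w 1, v 2 * w 0 - v 0 * w 2, v 0 * w 1 - v 1 * w 0]

/-- Componentwise action of a diagonal matrix. -/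
def dmul3 (a v : Fin 3 → ℝ) : Fin 3 → ℝ := fun i => a i * v i

/-- The cubic polynomial vector P⁽³⁾(M) of the k = 3 modified Euler–Poinsot system. -/
def P3vec (a1 a2 a3 : ℝ) (M : Fin 3 → ℝ) : Fin 3 → ℝ :=
  ![M 0 * ((a1 * a2 + 8 * a1 ^ 2 - a3 * a2 + a3 * a1) * (M 0) ^ 2
        + (3 * a3 * a2 - 3 * a3 * a1 + 9 * a1 * a2) * (M 1) ^ 2
        + (9 * a3 * a1 - 3 * a1 * a2 + 3 * a3 * a2) * (M 2) ^ 2),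
    M 1 * ((-3 * a3 * a2 + 3 * a3 * a1 + 9 * a1 * a2) * (M 0) ^ 2
        + (a3 * a2 - a3 * a1 + 8 * a2 ^ 2 + a1 * a2) * (M 1) ^ 2
        + (3 * a3 * a1 - 3 * a1 * a2 + 9 * a3 * a2) * (M 2) ^ 2),
    M 2 * ((9 * a3 * a1 + 3 * a1 * a2 - 3 * a3 * a2) * (M 0) ^ 2
        + (-3 * a3 * a1 + 3 * a1 * a2 + 9 * a3 * a2) * (M 1) ^ 2
        + (a3 * a1 + 8 * a3 ^ 2 - a1 * a2 + a3 * a2) * (M 2) ^ 2)]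

/-!
Every component of `P⁽³⁾` has the form `Mᵢ · ∑ⱼ Cᵢⱼ Mⱼ²`, so by the chain rule
`d/dt P⁽³⁾(M) = DP⁽³⁾(M)[Ṁ]`. Substituting the Euler equation `Ṁ = M × aM`, the claim becomes
the polynomial identity `DP⁽³⁾(M)[M × aM] = 3 P⁽³⁾(M) × aM`, which holds identically in
`M` and `a`.
-/

section DiagCubic

variable {ι : Type*} [Fintype ι]

def diagCubic (C : Matrix ι ι ℝ) (v : ι → ℝ) : ι → ℝ :=
  fun i => v i * ∑ j, C i j * v j ^ 2

def diagCubicDeriv (C : Matrix ι ι ℝ) (x v : ι → ℝ) : ι → ℝ :=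
  fun i => v i * ∑ j, C i j * x j ^ 2 + x i * ∑ j, C i j * (2 * x j * v j)

theorem hasDerivAt_diagCubic_comp (C : Matrix ι ι ℝ) {f : ℝ → ι → ℝ} {v : ι → ℝ} {t : ℝ}
    (hf : ∀ i, HasDerivAt (fun s => f s i) (v i) t) (i : ι) :
    HasDerivAt (fun s => diagCubic C (f s) i) (diagCubicDeriv C (f t) v i) t := by
  have hsum : HasDerivAt (fun s => ∑ j, C i j * f s j ^ 2)
      (∑ j, C i j * (2 * f t j * v j)) t := by
    refine HasDerivAt.fun_sum fun j _ => ?_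
    simpa using ((hf j).pow 2).const_mul (C i j)
  exact (hf i).mul hsum

end DiagCubic

def P3coeff (a1 a2 a3 : ℝ) : Matrix (Fin 3) (Fin 3) ℝ :=
  !![a1 * a2 + 8 * a1 ^ 2 - a3 * a2 + a3 * a1, 3 * a3 * a2 - 3 * a3 * a1 + 9 * a1 * a2,
      9 * a3 * a1 - 3 * a1 * a2 + 3 * a3 * a2;
    -3 * a3 * a2 + 3 * a3 * a1 + 9 * a1 * a2, a3 * a2 - a3 * a1 + 8 * a2 ^ 2 + a1 * a2,
      3 * a3 * a1 - 3 * a1 * a2 + 9 * a3 * a2;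
    9 * a3 * a1 + 3 * a1 * a2 - 3 * a3 * a2, -3 * a3 * a1 + 3 * a1 * a2 + 9 * a3 * a2,
      a3 * a1 + 8 * a3 ^ 2 - a1 * a2 + a3 * a2]

theorem P3vec_eq_diagCubic (a1 a2 a3 : ℝ) : P3vec a1 a2 a3 = diagCubic (P3coeff a1 a2 a3) := by
  ext M i
  fin_cases i <;> simp [P3vec, diagCubic, P3coeff, Fin.sum_univ_three, add_assoc]

theorem diagCubicDeriv_P3coeff_cross (a1 a2 a3 : ℝ) (x : Fin 3 → ℝ) :
    diagCubicDeriv (P3coeff a1 a2 a3) x (cross3 x (dmul3 ![a1, a2, a3] x)) =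
      3 • cross3 (P3vec a1 a2 a3 x) (dmul3 ![a1, a2, a3] x) := by
  ext i
  fin_cases i <;>
    · simp [diagCubicDeriv, P3coeff, P3vec, cross3, dmul3, Fin.sum_univ_three]
      ring

theorem P3_solves_Poisson_general (a1 a2 a3 : ℝ)
    (M M' : ℝ → Fin 3 → ℝ)
    (hM : ∀ t i, HasDerivAt (fun s => M s i) (M' t i) t)
    (heqM : ∀ t, M' t = cross3 (M t) (dmul3 ![a1, a2, a3] (M t))) :
    ∀ t i, HasDerivAt (fun s => P3vec a1 a2 a3 (M s) i)
      (3 * cross3 (P3vec a1 a2 a3 (M t)) (dmul3 ![a1, a2, a3] (M t)) i) t := by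
  intro t i
  have hP := hasDerivAt_diagCubic_comp (P3coeff a1 a2 a3) (hM t) i
  rw [heqM t, diagCubicDeriv_P3coeff_cross, ← P3vec_eq_diagCubic] at hP
  simpa using hP

/-- If M(t) solves the Euler equations Ṁ = M × aM, then γ(t) := P⁽³⁾(M(t))
    solves the Poisson equations γ̇ = 3·γ × aM. -/
theorem P3_solves_Poisson (a1 a2 a3 : ℝ)
    (h12 : a1 ≠ a2) (h23 : a2 ≠ a3) (h31 : a3 ≠ a1)
    (M M' : ℝ → Fin 3 → ℝ)
    (hM : ∀ t i, HasDerivAt (fun s => M s i) (M' t i) t)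
    (heqM : ∀ t, M' t = cross3 (M t) (dmul3 ![a1, a2, a3] (M t))) :
    ∀ t i, HasDerivAt (fun s => P3vec a1 a2 a3 (M s) i)
      (3 * cross3 (P3vec a1 a2 a3 (M t)) (dmul3 ![a1, a2, a3] (M t)) i) t :=
  P3_solves_Poisson_general a1 a2 a3 M M' hM heqM
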